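/- arXiv:1902.10603 — 8 statements merged into one kernel-verified Lean document; each statement's English description precedes it below -/
import Mathlib

section
/- In any involutory medial quandle Q, any two elementary displacements commute: for all a, b, c, d in Q, (β_a ∘ β_b) ∘ (β_c ∘ β_d) = (β_c ∘ β_d) ∘ (β_a ∘ β_b). -/
/-- An involutory medial quandle. -/
class IMQ (Q : Type*) where
  op : Q → Q → Q
  idem : ∀ x, op x x = x
  invol : ∀ x y, op (op x y) y = x
  rdist : ∀ x y z, op (op x y) z = op (op x z) (op y z)
  medial : ∀ w x y z, op (op w x) (op y z) = op (op w y) (op x z)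

lemma IMQ.conj {Q : Type*} [IMQ Q] (x y z : Q) :
    IMQ.op (IMQ.op (IMQ.op x z) y) z = IMQ.op x (IMQ.op y z) := by
  rw [IMQ.rdist, IMQ.invol]

lemma IMQ.swap3 {Q : Type*} [IMQ Q] (x p q r : Q) :
    IMQ.op (IMQ.op (IMQ.op x p) q) r = IMQ.op (IMQ.op (IMQ.op x r) q) p := by
  have hx : x = IMQ.op (IMQ.op x q) q := (IMQ.invol x q).symm
  set y := IMQ.op x q with hy
  calc IMQ.op (IMQ.op (IMQ.op x p) q) r
      = IMQ.op (IMQ.op (IMQ.op (IMQ.op y q) p) q) r := by rw [← hx]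
    _ = IMQ.op (IMQ.op y (IMQ.op p q)) r := by rw [IMQ.conj]
    _ = IMQ.op (IMQ.op y (IMQ.op p q)) (IMQ.op (IMQ.op r q) q) := by rw [IMQ.invol]
    _ = IMQ.op (IMQ.op y (IMQ.op r q)) (IMQ.op (IMQ.op p q) q) := by rw [IMQ.medial]
    _ = IMQ.op (IMQ.op y (IMQ.op r q)) p := by rw [IMQ.invol]
    _ = IMQ.op (IMQ.op (IMQ.op (IMQ.op y q) r) q) p := by rw [IMQ.conj]
    _ = IMQ.op (IMQ.op (IMQ.op x r) q) p := by rw [← hx]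

/-- Any two elementary displacements commute. -/
theorem elementary_displacements_commute {Q : Type*} [IMQ Q] (a b c d : Q) :
    ((fun x => IMQ.op x a) ∘ (fun x => IMQ.op x b)) ∘
        ((fun x => IMQ.op x c) ∘ (fun x => IMQ.op x d)) =
      ((fun x => IMQ.op x c) ∘ (fun x => IMQ.op x d)) ∘
        ((fun x => IMQ.op x a) ∘ (fun x => IMQ.op x b)) := by
  funext x
  show IMQ.op (IMQ.op (IMQ.op (IMQ.op x d) c) b) a
      = IMQ.op (IMQ.op (IMQ.op (IMQ.op x b) a) d) c
  rw [IMQ.swap3 (IMQ.op x d) c b a, IMQ.swap3 x d a b]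
end

section
/- The core quandle of an abelian group A is semiregular: if a composition of an even number of translations d = β_{a_1} ∘ ⋯ ∘ β_{a_{2n}} (with alternating-sign action d(a) = 2a_1 − 2a_2 + ⋯ − 2a_{2n} + a) has a fixed point in A, then d is the identity map on A. -/
lemma core_aux {A : Type*} [AddCommGroup A] (l : List A) (x y : A) :
    (l.map (fun b => fun x : A => 2 • b - x)).foldr (· ∘ ·) id x -
      (l.map (fun b => fun x : A => 2 • b - x)).foldr (· ∘ ·) id y
      = (-1 : ℤ) ^ l.length • (x - y) := by
  induction l with
  | nil => simp
  | cons b t ih =>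
    simp only [List.map_cons, List.foldr_cons, Function.comp_apply, List.length_cons,
      pow_succ]
    rw [sub_sub_sub_cancel_left, ← neg_sub, ih, mul_smul]
    rw [neg_one_zsmul, smul_neg]

/-- The core quandle of an abelian group is semiregular: a composition of an
even number of translations `β_b x = 2b - x` with a fixed point is the identity. -/
theorem core_semiregular {A : Type*} [AddCommGroup A] (n : ℕ) (a : Fin (2 * n) → A)
    (d : A → A)
    (hd : d = (List.ofFn (fun i => fun x : A => 2 • a i - x)).foldr (· ∘ ·) id)
    (hfix : ∃ x, d x = x) :
    d = id := by
  obtain ⟨x0, hx0⟩ := hfix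
  have hmap : (List.ofFn (fun i => fun x : A => 2 • a i - x))
      = (List.ofFn a).map (fun b => fun x : A => 2 • b - x) := by
    rw [List.map_ofFn]; rfl
  funext y
  have h := core_aux (A := A) (List.ofFn a) x0 y
  rw [← hmap, ← hd, hx0, List.length_ofFn, pow_mul, neg_one_sq, one_pow, one_zsmul] at h
  have : d y = y := sub_right_inj.mp h
  simpa using this
end

section
/- In an involutory medial quandle Q, for every x in Q and every displacement d in Dis(Q), conjugation by β_x inverts d: β_x ∘ d ∘ β_x = d⁻¹. -/
/-- The translation `β_q : x ↦ x ▷ q`, as a permutation. -/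
def beta {Q : Type*} [IMQ Q] (q : Q) : Equiv.Perm Q :=
  Function.Involutive.toPerm (fun x => IMQ.op x q) (fun x => IMQ.invol x q)

/-- The displacement group: the subgroup generated by the elementary displacements. -/
def Dis (Q : Type*) [IMQ Q] : Subgroup (Equiv.Perm Q) :=
  Subgroup.closure {p | ∃ y z : Q, p = beta y * beta z}

namespace IMQhelp

open IMQ

variable {Q : Type*} [IMQ Q]

lemma key (w x y z : Q) :
    op (op (op (op w x) z) y) x = op (op w y) z := by
  have h1 : op (op (op (op w x) z) y) x
      = op (op (op (op w x) z) x) (op y x) := rdist _ _ _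
  have h2 : op (op (op w x) z) x = op w (op z x) := by
    rw [rdist (op w x) z x, invol]
  have h3 : op (op w (op z x)) (op y x) = op (op w y) (op (op z x) x) :=
    medial _ _ _ _
  rw [h1, h2, h3, invol]

lemma beta_apply (q w : Q) : (beta q) w = op w q := rfl

lemma beta_swap (x y z : Q) :
    beta x * beta y * beta z = beta z * beta y * beta x := by
  ext w
  simp only [Equiv.Perm.mul_apply, beta_apply]
  have := key (op w x) x y z
  rwa [invol] at this

lemma beta_invol (q : Q) : beta q * beta q = 1 := by
  ext w
  simp [beta_apply, invol]

lemma gen_comm (a b c d : Q) :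
    (beta a * beta b) * (beta c * beta d) = (beta c * beta d) * (beta a * beta b) := by
  have h1 : beta a * beta b * beta c = beta c * beta b * beta a := beta_swap a b c
  have h2 : beta b * beta a * beta d = beta d * beta a * beta b := beta_swap b a d
  calc beta a * beta b * (beta c * beta d)
      = (beta a * beta b * beta c) * beta d := by group
    _ = (beta c * beta b * beta a) * beta d := by rw [h1]
    _ = beta c * (beta b * beta a * beta d) := by group
    _ = beta c * (beta d * beta a * beta b) := by rw [h2]
    _ = beta c * beta d * (beta a * beta b) := by group

lemma dis_comm {d e : Equiv.Perm Q} (hd : d ∈ Dis Q) (he : e ∈ Dis Q) :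
    d * e = e * d := by
  induction hd using Subgroup.closure_induction with
  | mem g hg =>
    induction he using Subgroup.closure_induction with
    | mem h hh =>
      obtain ⟨a, b, rfl⟩ := hg
      obtain ⟨c, d, rfl⟩ := hh
      exact gen_comm a b c d
    | one => simp
    | mul p q _ _ hp hq => rw [mul_assoc, ← hq, ← mul_assoc, hp, mul_assoc]
    | inv p _ hp =>
      have : g * p = p * g := hp
      calc g * p⁻¹ = p⁻¹ * (p * g) * p⁻¹ := by group
        _ = p⁻¹ * (g * p) * p⁻¹ := by rw [this]
        _ = p⁻¹ * g := by group
  | one => simp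
  | mul p q _ _ hp hq => rw [mul_assoc, hq, ← mul_assoc, hp, mul_assoc]
  | inv p _ hp =>
    calc p⁻¹ * e = p⁻¹ * e * p * p⁻¹ := by group
      _ = p⁻¹ * (e * p) * p⁻¹ := by group
      _ = p⁻¹ * (p * e) * p⁻¹ := by rw [hp]
      _ = e * p⁻¹ := by group

lemma gen_conj (x a b : Q) :
    beta x * (beta a * beta b) * beta x = (beta a * beta b)⁻¹ := by
  have h : beta x * beta a * beta b = beta b * beta a * beta x := beta_swap x a b
  have hb : beta b * beta b = 1 := beta_invol b
  have hx : beta x * beta x = 1 := beta_invol x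
  have hinv : (beta a * beta b)⁻¹ = beta b * beta a := by
    rw [mul_inv_rev, inv_eq_of_mul_eq_one_right (beta_invol a),
      inv_eq_of_mul_eq_one_right (beta_invol b)]
  rw [hinv]
  calc beta x * (beta a * beta b) * beta x
      = (beta x * beta a * beta b) * beta x := by group
    _ = (beta b * beta a * beta x) * beta x := by rw [h]
    _ = beta b * beta a * (beta x * beta x) := by group
    _ = beta b * beta a := by rw [hx, mul_one]

end IMQhelp

/-- Conjugation by a translation inverts every displacement. -/
theorem beta_conj_displacement_inv {Q : Type*} [IMQ Q] (x : Q) (d : Equiv.Perm Q)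
    (hd : d ∈ Dis Q) :
    beta x * d * beta x = d⁻¹ := by
  have hx : beta x * beta x = 1 := IMQhelp.beta_invol x
  induction hd using Subgroup.closure_induction with
  | mem g hg =>
    obtain ⟨a, b, rfl⟩ := hg
    exact IMQhelp.gen_conj x a b
  | one => simpa using hx
  | mul p q hp hq ihp ihq =>
    have hcomm : p * q = q * p := IMQhelp.dis_comm hp hq
    calc beta x * (p * q) * beta x
        = (beta x * p * beta x) * (beta x * q * beta x) := by
          rw [mul_assoc (beta x * p) (beta x) _]
          rw [show beta x * (beta x * q * beta x) = q * beta x by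
            rw [← mul_assoc, ← mul_assoc, hx, one_mul]]
          group
      _ = p⁻¹ * q⁻¹ := by rw [ihp, ihq]
      _ = (q * p)⁻¹ := (mul_inv_rev q p).symm
      _ = (p * q)⁻¹ := by rw [hcomm]
  | inv p hp ihp =>
    have hxinv : (beta x)⁻¹ = beta x := inv_eq_of_mul_eq_one_right hx
    calc beta x * p⁻¹ * beta x
        = (beta x * p * beta x)⁻¹ := by rw [mul_inv_rev, mul_inv_rev, hxinv]; group
      _ = p⁻¹⁻¹ := by rw [ihp]
end

section
/- Let Q₁ and Q₂ be semiregular involutory medial quandles, and f : Q₁ → Q₂ a surjective quandle homomorphism. Then f is an isomorphism if and only if: (a) the induced epimorphism Dis(f) : Dis(Q₁) → Dis(Q₂) (sending β_{q_1}∘⋯∘β_{q_{2n}} to β_{f(q_1)}∘⋯∘β_{f(q_{2n})}) is injective, and (b) f maps distinct orbits of Q₁ to distinct images (i.e., if x, y lie in different orbits then f(x) ≠ f(y)). -/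
/-- The displacement determined by a list of quandle elements:
the composition `β_{q₁} ∘ ⋯ ∘ β_{q_n}` of the corresponding translations. -/
def dispOf {Q : Type*} [IMQ Q] (l : List Q) : Q → Q :=
  (l.map (fun q => fun x => IMQ.op x q)).foldr (· ∘ ·) id

/-- `Q` is semiregular: the only displacement (composition of an even number of
translations) with a fixed point is the identity. -/
def Semiregular (Q : Type*) [IMQ Q] : Prop :=
  ∀ l : List Q, Even l.length → (∃ x, dispOf l x = x) → dispOf l = id


lemma dispOf_cons {Q : Type*} [IMQ Q] (q : Q) (l : List Q) (x : Q) :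
    dispOf (q :: l) x = IMQ.op (dispOf l x) q := rfl

lemma map_dispOf {Q₁ Q₂ : Type*} [IMQ Q₁] [IMQ Q₂] (f : Q₁ → Q₂)
    (hhom : ∀ x y : Q₁, f (IMQ.op x y) = IMQ.op (f x) (f y)) (l : List Q₁) (x : Q₁) :
    f (dispOf l x) = dispOf (l.map f) (f x) := by
  induction l with
  | nil => rfl
  | cons q l ih => simp [dispOf_cons, hhom, ih]

/-- A surjective quandle map between semiregular involutory medial quandles is an
isomorphism iff (a) the induced epimorphism of displacement groups is injective,
and (b) elements of different orbits have different images. -/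
theorem surjective_quandle_map_iso_iff {Q₁ Q₂ : Type*} [IMQ Q₁] [IMQ Q₂]
    (h₁ : Semiregular Q₁) (h₂ : Semiregular Q₂) (f : Q₁ → Q₂)
    (hhom : ∀ x y : Q₁, f (IMQ.op x y) = IMQ.op (f x) (f y))
    (hsurj : Function.Surjective f) :
    Function.Bijective f ↔
      ((∀ l : List Q₁, Even l.length → dispOf (l.map f) = id → dispOf l = id) ∧
        (∀ x y : Q₁, ¬(∃ l : List Q₁, Even l.length ∧ dispOf l x = y) → f x ≠ f y)) := by
  constructor
  · intro hbij
    refine ⟨fun l _ hid => ?_, fun x y hno hfxy => ?_⟩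
    · funext x
      apply hbij.1
      rw [map_dispOf f hhom, hid]
      rfl
    · exact hno ⟨[], Even.zero, hbij.1 hfxy⟩
  · rintro ⟨ha, hb⟩
    refine ⟨fun x y hfxy => ?_, hsurj⟩
    by_contra hne
    by_cases horb : ∃ l : List Q₁, Even l.length ∧ dispOf l x = y
    · obtain ⟨l, hev, hl⟩ := horb
      have hfix : dispOf (l.map f) (f x) = f x := by
        rw [← map_dispOf f hhom, hl, hfxy]
      have hid2 : dispOf (l.map f) = id :=
        h₂ (l.map f) (by simpa using hev) ⟨f x, hfix⟩
      have : dispOf l = id := ha l hev hid2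
      exact hne ((hl.symm.trans (by rw [this]; rfl)).symm)
    · exact hb x y horb hfxy
end

section
/- Let G be a group in which every element of a generating set S satisfies s² = 1 and any three conjugates c₁, c₂, c₃ of elements of S satisfy c₁c₂c₃ = c₃c₂c₁. Then for any odd positive integer n and conjugates c₁, …, c_n (in G) of elements of S, the product c₁⋯c_n satisfies (c₁⋯c_n)² = 1, hence c₁⋯c_n = c_n⋯c₁. -/
private lemma lemA' {G : Type*} [Group G] (C : Set G)
    (hrel : ∀ c₁ ∈ C, ∀ c₂ ∈ C, ∀ c₃ ∈ C, c₁ * c₂ * c₃ = c₃ * c₂ * c₁) :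
    ∀ (n : ℕ) (l : List G), l.length = 2 * n + 1 → (∀ g ∈ l, g ∈ C) →
      ∀ x ∈ C, ∀ y ∈ C, x * l.prod * y = y * l.prod * x := by
  intro n
  induction n with
  | zero =>
    intro l hl hmem x hx y hy
    match l, hl with
    | [c], _ =>
      simp only [List.prod_cons, List.prod_nil, mul_one]
      exact hrel x hx c (hmem c (by simp)) y hy
  | succ k ih =>
    intro l hl hmem x hx y hy
    match l, hl with
    | c :: d :: l', hl =>
      have hl' : l'.length = 2 * k + 1 := by simp at hl; omega
      have hc : c ∈ C := hmem c (by simp)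
      have hd : d ∈ C := hmem d (by simp)
      have hmem' : ∀ g ∈ l', g ∈ C := fun g hg => hmem g (by simp [hg])
      set Q := l'.prod with hQ
      have h1 : d * Q * y = y * Q * d := ih l' hl' hmem' d hd y hy
      have h2 : x * c * y = y * c * x := hrel x hx c hc y hy
      have h3 : x * Q * d = d * Q * x := ih l' hl' hmem' x hx d hd
      simp only [List.prod_cons, ← hQ]
      calc x * (c * (d * Q)) * y
          = x * c * (d * Q * y) := by group
        _ = x * c * (y * Q * d) := by rw [h1]
        _ = (x * c * y) * Q * d := by group
        _ = (y * c * x) * Q * d := by rw [h2]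
        _ = y * c * (x * Q * d) := by group
        _ = y * c * (d * Q * x) := by rw [h3]
        _ = y * (c * (d * Q)) * x := by group

private lemma lemA {G : Type*} [Group G] (C : Set G)
    (hrel : ∀ c₁ ∈ C, ∀ c₂ ∈ C, ∀ c₃ ∈ C, c₁ * c₂ * c₃ = c₃ * c₂ * c₁) :
    ∀ (n : ℕ) (l : List G), l.length = 2 * n + 1 → (∀ g ∈ l, g ∈ C) →
      ∀ a ∈ C, ∀ b ∈ C, a * b * l.prod = l.prod * b * a := by
  intro n
  induction n with
  | zero =>
    intro l hl hmem a ha b hb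
    match l, hl with
    | [c], _ =>
      simp only [List.prod_cons, List.prod_nil, mul_one]
      exact hrel a ha b hb c (hmem c (by simp))
  | succ k ih =>
    intro l hl hmem a ha b hb
    match l, hl with
    | c :: d :: l', hl =>
      have hl' : l'.length = 2 * k + 1 := by simp at hl; omega
      have hc : c ∈ C := hmem c (by simp)
      have hd : d ∈ C := hmem d (by simp)
      have hmem' : ∀ g ∈ l', g ∈ C := fun g hg => hmem g (by simp [hg])
      set Q := l'.prod with hQ
      have h1 : c * d * Q = Q * d * c := ih l' hl' hmem' c hc d hd
      have h2 : b * Q * d = d * Q * b := lemA' C hrel k l' hl' hmem' b hb d hd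
      have h3 : a * d * Q = Q * d * a := ih l' hl' hmem' a ha d hd
      have h4 : a * b * c = c * b * a := hrel a ha b hb c hc
      simp only [List.prod_cons, ← hQ]
      calc a * b * (c * (d * Q))
          = a * b * (c * d * Q) := by group
        _ = a * b * (Q * d * c) := by rw [h1]
        _ = a * (b * Q * d) * c := by group
        _ = a * (d * Q * b) * c := by rw [h2]
        _ = (a * d * Q) * (b * c) := by group
        _ = (Q * d * a) * (b * c) := by rw [h3]
        _ = Q * d * (a * b * c) := by group
        _ = Q * d * (c * b * a) := by rw [h4]
        _ = (Q * d * c) * b * a := by group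
        _ = (c * d * Q) * b * a := by rw [← h1]
        _ = (c * (d * Q)) * b * a := by group

private lemma lemB {G : Type*} [Group G] (C : Set G)
    (hrel : ∀ c₁ ∈ C, ∀ c₂ ∈ C, ∀ c₃ ∈ C, c₁ * c₂ * c₃ = c₃ * c₂ * c₁) :
    ∀ (n : ℕ) (l : List G), l.length = 2 * n + 1 → (∀ g ∈ l, g ∈ C) →
      l.reverse.prod = l.prod := by
  intro n
  induction n with
  | zero =>
    intro l hl _
    match l, hl with
    | [c], _ => simp
  | succ k ih =>
    intro l hl hmem
    match l, hl with
    | c :: d :: l', hl =>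
      have hl' : l'.length = 2 * k + 1 := by simp at hl; omega
      have hc : c ∈ C := hmem c (by simp)
      have hd : d ∈ C := hmem d (by simp)
      have hmem' : ∀ g ∈ l', g ∈ C := fun g hg => hmem g (by simp [hg])
      have h1 : c * d * l'.prod = l'.prod * d * c :=
        lemA C hrel k l' hl' hmem' c hc d hd
      have h2 : l'.reverse.prod = l'.prod := ih l' hl' hmem'
      calc (c :: d :: l').reverse.prod
          = l'.reverse.prod * d * c := by
            simp [List.reverse_cons, List.prod_append, mul_assoc]
        _ = l'.prod * d * c := by rw [h2]
        _ = c * d * l'.prod := by rw [← h1]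
        _ = (c :: d :: l').prod := by simp [List.prod_cons]; group

private lemma lemC {G : Type*} [Group G] :
    ∀ (l : List G), (∀ g ∈ l, g * g = 1) → l.prod * l.reverse.prod = 1 := by
  intro l
  induction l with
  | nil => simp
  | cons a l ih =>
    intro h
    have ha : a * a = 1 := h a (by simp)
    have hl : ∀ g ∈ l, g * g = 1 := fun g hg => h g (by simp [hg])
    calc (a :: l).prod * (a :: l).reverse.prod
        = a * (l.prod * l.reverse.prod) * a := by
          simp [List.reverse_cons, List.prod_append, List.prod_cons, mul_assoc]
      _ = a * a := by rw [ih hl]; group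
      _ = 1 := ha

/-- In a group generated by involutions where any three conjugates of
generators satisfy `c₁c₂c₃ = c₃c₂c₁`, any product of an odd number of
conjugates of generators squares to `1`, hence equals the reversed product. -/
theorem odd_product_of_conjugates_sq_eq_one {G : Type*} [Group G] (S : Set G)
    (hgen : Subgroup.closure S = ⊤)
    (hinv : ∀ s ∈ S, s ^ 2 = 1)
    (hconj : ∀ c₁ c₂ c₃ : G,
      (∃ s ∈ S, ∃ g : G, c₁ = g * s * g⁻¹) →
      (∃ s ∈ S, ∃ g : G, c₂ = g * s * g⁻¹) →
      (∃ s ∈ S, ∃ g : G, c₃ = g * s * g⁻¹) →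
      c₁ * c₂ * c₃ = c₃ * c₂ * c₁)
    (n : ℕ) (hn : Odd n) (c : Fin n → G)
    (hc : ∀ i, ∃ s ∈ S, ∃ g : G, c i = g * s * g⁻¹) :
    ((List.ofFn c).prod) ^ 2 = 1 ∧ (List.ofFn c).prod = ((List.ofFn c).reverse).prod := by
  set C : Set G := {x | ∃ s ∈ S, ∃ g : G, x = g * s * g⁻¹} with hC
  have hrel : ∀ c₁ ∈ C, ∀ c₂ ∈ C, ∀ c₃ ∈ C, c₁ * c₂ * c₃ = c₃ * c₂ * c₁ :=
    fun c₁ h₁ c₂ h₂ c₃ h₃ => hconj c₁ c₂ c₃ h₁ h₂ h₃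
  obtain ⟨k, hk⟩ := hn
  set l := List.ofFn c with hldef
  have hl : l.length = 2 * k + 1 := by simp [hldef, hk]
  have hmem : ∀ g ∈ l, g ∈ C := by
    intro g hg
    rw [hldef, List.mem_ofFn] at hg
    obtain ⟨i, rfl⟩ := hg
    exact hc i
  have hB : l.reverse.prod = l.prod := lemB C hrel k l hl hmem
  have hsq : ∀ g ∈ l, g * g = 1 := by
    intro g hg
    obtain ⟨s, hs, h, rfl⟩ := hmem g hg
    have : s * s = 1 := by have := hinv s hs; rwa [pow_two] at this
    calc h * s * h⁻¹ * (h * s * h⁻¹) = h * (s * s) * h⁻¹ := by group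
      _ = 1 := by rw [this]; group
  refine ⟨?_, hB.symm⟩
  have := lemC l hsq
  rw [hB] at this
  rwa [pow_two]
end

section
/- Let G be a group generated by a set of involutions {g_a} satisfying c₁c₂c₃ = c₃c₂c₁ for all conjugates c₁, c₂, c₃ of generators. Then the subgroup G² generated by all products g_a g_b of two generators is abelian. -/
/-- If `G` is generated by involutions `g_a` such that any three conjugates of
generators satisfy `c₁c₂c₃ = c₃c₂c₁`, then the subgroup `G²` generated by the
products `g_a g_b` of two generators is abelian. -/
theorem IMG_sq_abelian {G : Type*} [Group G] {A : Type*} (g : A → G)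
    (hgen : Subgroup.closure (Set.range g) = ⊤)
    (hinv : ∀ a, (g a) ^ 2 = 1)
    (hconj : ∀ c₁ c₂ c₃ : G,
      (∃ a, ∃ h : G, c₁ = h * g a * h⁻¹) →
      (∃ a, ∃ h : G, c₂ = h * g a * h⁻¹) →
      (∃ a, ∃ h : G, c₃ = h * g a * h⁻¹) →
      c₁ * c₂ * c₃ = c₃ * c₂ * c₁) :
    ∀ x ∈ Subgroup.closure {z : G | ∃ a b, z = g a * g b},
      ∀ y ∈ Subgroup.closure {z : G | ∃ a b, z = g a * g b},
        x * y = y * x := by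
  have key : ∀ x ∈ {z : G | ∃ a b, z = g a * g b},
      ∀ y ∈ {z : G | ∃ a b, z = g a * g b}, x * y = y * x := by
    rintro x ⟨a, b, rfl⟩ y ⟨c, d, rfl⟩
    have h1 := hconj (g a) (g b) (g c) ⟨a, 1, by group⟩ ⟨b, 1, by group⟩ ⟨c, 1, by group⟩
    have h2 := hconj (g b) (g a) (g d) ⟨b, 1, by group⟩ ⟨a, 1, by group⟩ ⟨d, 1, by group⟩
    calc g a * g b * (g c * g d) = (g a * g b * g c) * g d := by group
      _ = (g c * g b * g a) * g d := by rw [h1]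
      _ = g c * (g b * g a * g d) := by group
      _ = g c * (g d * g a * g b) := by rw [h2]
      _ = g c * g d * (g a * g b) := by group
  intro x hx y hy
  induction hx, hy using Subgroup.closure_induction₂ with
  | mem x y hx hy => exact key x hx y hy
  | one_left x hx => group
  | one_right x hx => group
  | mul_left x y z _ _ _ h1 h2 =>
      calc x * y * z = x * (y * z) := by group
        _ = x * (z * y) := by rw [h2]
        _ = (x * z) * y := by group
        _ = (z * x) * y := by rw [h1]
        _ = z * (x * y) := by group
  | mul_right y z x _ _ _ h1 h2 =>
      calc x * (y * z) = (x * y) * z := by group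
        _ = (y * x) * z := by rw [h1]
        _ = y * (x * z) := by group
        _ = y * (z * x) := by rw [h2]
        _ = y * z * x := by group
  | inv_left x y _ _ h =>
      have := congrArg (fun t => x⁻¹ * t * x⁻¹) h
      simpa [mul_assoc] using this.symm
  | inv_right x y _ _ h =>
      have := congrArg (fun t => y⁻¹ * t * y⁻¹) h
      simpa [mul_assoc] using this.symm
end

section
/- Let Q be a set with a partition P into 2-element subsets, and for each q ∈ Q a permutation β_q of Q such that: (1) β_q(q) = q; (2) each β_q is a product of transpositions each of which swaps the two elements of a block of P; (3) β_{q₁} = β_{q₂} whenever {q₁, q₂} ∈ P. Then the operation p ▷ q := β_q(p) makes Q an involutory medial quandle. -/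
/-- Given a partition `P` of `Q` into 2-element blocks and, for each `q`,
a permutation `β_q` fixing `q`, equal to a product of transpositions respecting
`P` (i.e. an involution moving each point only within its block), with
`β_{q₁} = β_{q₂}` whenever `q₁, q₂` lie in a common block, the operation
`p ▷ q = β_q p` makes `Q` an involutory medial quandle. -/
theorem partition_permutations_give_imq {Q : Type*} (P : Set (Set Q))
    (hpair : ∀ p ∈ P, ∃ a b : Q, a ≠ b ∧ p = {a, b})
    (hcover : ∀ x : Q, ∃ p ∈ P, x ∈ p)
    (hdisj : ∀ p ∈ P, ∀ q ∈ P, p ≠ q → p ∩ q = ∅)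
    (β : Q → Q → Q)
    (hfix : ∀ q, β q q = q)
    (hinvol : ∀ q x, β q (β q x) = x)
    (hresp : ∀ q x, β q x = x ∨ {x, β q x} ∈ P)
    (hblock : ∀ p ∈ P, ∀ q₁ ∈ p, ∀ q₂ ∈ p, β q₁ = β q₂) :
    (∀ x : Q, β x x = x) ∧
    (∀ x y : Q, β y (β y x) = x) ∧
    (∀ x y z : Q, β z (β y x) = β (β z y) (β z x)) ∧
    (∀ w x y z : Q, β (β z y) (β x w) = β (β z x) (β y w)) := by
  have hinj : ∀ q a b, β q a = β q b → a = b := by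
    intro q a b h
    have := congrArg (β q) h
    rwa [hinvol, hinvol] at this
  have huniq : ∀ p ∈ P, ∀ q ∈ P, ∀ c, c ∈ p → c ∈ q → p = q := by
    intro p hp q hq c hcp hcq
    by_contra hne
    have h := hdisj p hp q hq hne
    have : c ∈ p ∩ q := Set.mem_inter hcp hcq
    rw [h] at this
    exact this
  have hcomm : ∀ y z x, β y (β z x) = β z (β y x) := by
    intro y z x
    by_cases hb : β z x = x
    · rw [hb]
      by_cases hc : β z (β y x) = β y x
      · rw [hc]
      · exfalso
        rcases hresp z (β y x) with h | h
        · exact hc h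
        by_cases hcx : β y x = x
        · exact hc (by rw [hcx, hb])
        rcases hresp y x with h2 | h2
        · exact hcx h2
        have heq : ({β y x, β z (β y x)} : Set Q) = {x, β y x} :=
          huniq _ h _ h2 (β y x) (by left; rfl) (by right; rfl)
        have hm : β z (β y x) ∈ ({x, β y x} : Set Q) := heq ▸ (Set.mem_insert_iff.mpr (Or.inr rfl))
        rcases hm with h3 | h3
        · exact hcx (hinj z _ _ (by rw [h3, hb]))
        · exact hc h3
    · rcases hresp z x with h | h
      · exact absurd h hb
      by_cases hcx : β y x = x
      · rw [hcx]
        by_cases hd : β y (β z x) = β z x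
        · rw [hd]
        · exfalso
          rcases hresp y (β z x) with h2 | h2
          · exact hd h2
          have heq : ({β z x, β y (β z x)} : Set Q) = {x, β z x} :=
            huniq _ h2 _ h (β z x) (by left; rfl) (by right; rfl)
          have hm : β y (β z x) ∈ ({x, β z x} : Set Q) := heq ▸ (Set.mem_insert_iff.mpr (Or.inr rfl))
          rcases hm with h3 | h3
          · exact hb (hinj y _ _ (by rw [h3, hcx]))
          · exact hd h3
      · rcases hresp y x with h2 | h2
        · exact absurd h2 hcx
        have heq : ({x, β y x} : Set Q) = {x, β z x} :=
          huniq _ h2 _ h x (by left; rfl) (by left; rfl)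
        have hm : β y x ∈ ({x, β z x} : Set Q) := heq ▸ (Set.mem_insert_iff.mpr (Or.inr rfl))
        rcases hm with h3 | h3
        · exact absurd h3 hcx
        · have h3' : β y x = β z x := h3
          rw [h3', hinvol, ← h3', hinvol]
  have hsame : ∀ q y, β (β q y) = β y := by
    intro q y
    rcases hresp q y with h | h
    · rw [h]
    · exact hblock _ h (β q y) (by right; rfl) y (by left; rfl)
  refine ⟨hfix, fun x y => hinvol y x, ?_, ?_⟩
  · intro x y z
    rw [hsame z y, hcomm y z]
  · intro w x y z
    rw [hsame z y, hsame z x, hcomm y x]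
end

section
/- Let A = Z^r ⊕ Z/2^{n_1} ⊕ ⋯ ⊕ Z/2^{n_k} ⊕ B with B of odd order, viewed as a direct sum, and let Core′(A) ⊆ A be the set of tuples in which at most one of the first r + k coordinates is odd. Then Core′(A) is a subquandle of Core(A): it is closed under the operation x ▷ y = 2y − x. -/
/-- The characteristic subquandle of
`A = ℤ^r ⊕ ℤ/2^{n₁} ⊕ ⋯ ⊕ ℤ/2^{n_k} ⊕ B` (with `|B|` odd): the set of tuples
in which at most one of the first `r + k` coordinates is odd. -/
def charSubquandle (r k : ℕ) (n : Fin k → ℕ) (B : Type*) [AddCommGroup B] :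
    Set ((Fin r → ℤ) × ((j : Fin k) → ZMod (2 ^ (n j))) × B) :=
  {x | Set.Subsingleton {s : Fin r ⊕ Fin k |
    Sum.elim (fun i => ¬ (2 ∣ x.1 i)) (fun j => ¬ ((2 : ZMod (2 ^ (n j))) ∣ x.2.1 j)) s}}

private lemma aux_dvd {R : Type*} [CommRing R] (a b : R) :
    (2 : R) ∣ 2 • b - a ↔ (2 : R) ∣ a := by
  have h : (2 : R) ∣ 2 • b := ⟨b, by rw [two_smul, two_mul]⟩
  exact dvd_sub_right h

/-- The characteristic subquandle `Core′(A)` is closed under the core operation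
`x ▷ y = 2y - x`, hence is a subquandle of `Core(A)`. -/
theorem charSubquandle_closed (r k : ℕ) (n : Fin k → ℕ) (hn : ∀ j, 1 ≤ n j)
    (B : Type*) [AddCommGroup B] [Fintype B] (hB : Odd (Fintype.card B)) :
    ∀ x ∈ charSubquandle r k n B, ∀ y ∈ charSubquandle r k n B,
      2 • y - x ∈ charSubquandle r k n B := by
  intro x hx y hy
  simp only [charSubquandle, Set.mem_setOf_eq] at hx ⊢
  have key : {s : Fin r ⊕ Fin k |
      Sum.elim (fun i => ¬ (2 ∣ (2 • y - x).1 i))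
        (fun j => ¬ ((2 : ZMod (2 ^ (n j))) ∣ (2 • y - x).2.1 j)) s} =
      {s : Fin r ⊕ Fin k |
      Sum.elim (fun i => ¬ (2 ∣ x.1 i))
        (fun j => ¬ ((2 : ZMod (2 ^ (n j))) ∣ x.2.1 j)) s} := by
    ext s
    cases s with
    | inl i =>
        simp only [Set.mem_setOf_eq, Sum.elim_inl]
        rw [show (2 • y - x).1 i = 2 • y.1 i - x.1 i from rfl, aux_dvd]
    | inr j =>
        simp only [Set.mem_setOf_eq, Sum.elim_inr]
        rw [show (2 • y - x).2.1 j = 2 • y.2.1 j - x.2.1 j from rfl, aux_dvd]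
  rw [key]
  exact hx
end
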